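/- arXiv:0903.1136 — 3 statements merged into one kernel-verified Lean document; each statement's English description precedes it below -/
import Mathlib

section
/- Let V be a type with decidable equality, s a number of equivalence classes with sizes m : Fin s → ℕ, and u : (j : Fin s) → Fin (m j) → V globally injective (u j k = u j' k' implies j = j' and k = k'). Let x : Fin n → V. Then the conjunction over all classes j of the global constraints Prec([u j 0,…,u j (m j −1)], x) holds if and only if there exists Y : Fin (n+1) → (Fin s → ℕ) with Y 0 = (fun _ => 0) such that for every i : Fin n and every j : Fin s: (1) for every k : Fin (m j), if x i = u j k then (k : ℕ) ≤ Y i j; and (2) Y (i+1) j = Y i j + 1 if Y i j < m j and x i = u j ⟨Y i j⟩, and Y (i+1) j = Y i j otherwise. (Correctness of the ternary-constraint encoding of value precedence for partially interchangeable values, where Y i j records the number of values of class j already used before index i.) -/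
/-- Value precedence for a pair of values: whenever `b` occurs at position `i`,
`a` occurs at some earlier position. -/
def Prec {V : Type*} [DecidableEq V] {n : ℕ} (a b : V) (x : Fin n → V) : Prop :=
  ∀ i : Fin n, x i = b → ∃ l : Fin n, l < i ∧ x l = a

/-- Global value precedence over an (injective) family of values `v 0, …, v (m-1)`. -/
def PrecAll {V : Type*} [DecidableEq V] {n m : ℕ} (v : Fin m → V) (x : Fin n → V) : Prop :=
  ∀ j k : Fin m, j < k → Prec (v j) (v k) x

/-!
Fix one class `v 0, …, v (m-1)`: the counter `c` starts at `0` and advances exactly when the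
current entry of `x` is the value `v c` it is waiting for. Under precedence, inductively every
value `v k` seen so far has `k < c`; hence `v c` has not occurred yet, and since `v c` must
precede every `v k` with `c < k`, each new entry `v k` has `k ≤ c`, so the invariant persists.
Conversely, the counter only passes values that occurred, so `k ≤ c` at every occurrence of
`v k` gives each `v j`, `j < k`, an earlier occurrence. The classes do not interact, so the
encoding splits into one counter per class.
-/

section Counter

variable {V : Type*} [DecidableEq V] {n m : ℕ} (v : Fin m → V) (x : Fin n → V)

def precStep (c : ℕ) (a : V) : ℕ :=
  if ∃ k : Fin m, (k : ℕ) = c ∧ a = v k then c + 1 else c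

def precCount : Fin (n + 1) → ℕ :=
  Fin.induction 0 fun i c => precStep v c (x i)

variable {v x}

theorem self_le_precStep (c : ℕ) (a : V) : c ≤ precStep v c a := by
  unfold precStep; split_ifs <;> omega

theorem precStep_of_eq {c : ℕ} {k : Fin m} (hk : (k : ℕ) = c) (a : V) (ha : a = v k) :
    precStep v c a = c + 1 :=
  if_pos ⟨k, hk, ha⟩

@[simp]
theorem precCount_zero : precCount v x 0 = 0 := rfl

@[simp]
theorem precCount_succ (i : Fin n) :
    precCount v x i.succ = precStep v (precCount v x i.castSucc) (x i) :=
  Fin.induction_succ _ _ i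

theorem eq_precCount {y : Fin (n + 1) → ℕ} (h0 : y 0 = 0)
    (hsucc : ∀ i : Fin n, y i.succ = precStep v (y i.castSucc) (x i)) : y = precCount v x := by
  funext i
  induction i using Fin.induction with
  | zero => simp [h0]
  | succ i ih => rw [hsucc, precCount_succ, ih]

theorem exists_lt_of_lt_precCount {i : Fin (n + 1)} {k : Fin m} (hk : (k : ℕ) < precCount v x i) :
    ∃ l : Fin n, l.castSucc < i ∧ x l = v k := by
  induction i using Fin.induction with
  | zero => simp at hk
  | succ i ih =>
    rw [precCount_succ] at hk
    by_cases hstep : ∃ k' : Fin m, (k' : ℕ) = precCount v x i.castSucc ∧ x i = v k'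
    · obtain ⟨k', hk', hxi⟩ := hstep
      rw [precStep_of_eq hk' _ hxi] at hk
      rcases Nat.lt_succ_iff_lt_or_eq.1 hk with hlt | heq
      · obtain ⟨l, hl, hxl⟩ := ih hlt
        exact ⟨l, hl.trans (Fin.castSucc_lt_succ), hxl⟩
      · obtain rfl : k = k' := Fin.ext (heq.trans hk'.symm)
        exact ⟨i, Fin.castSucc_lt_succ, hxi⟩
    · rw [precStep, if_neg hstep] at hk
      obtain ⟨l, hl, hxl⟩ := ih hk
      exact ⟨l, hl.trans (Fin.castSucc_lt_succ), hxl⟩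

theorem PrecAll.le_of_forall_lt (hprec : PrecAll v x) {i : Fin n} {c : ℕ}
    (hbefore : ∀ l < i, ∀ k : Fin m, x l = v k → (k : ℕ) < c) {k : Fin m} (hxi : x i = v k) :
    (k : ℕ) ≤ c := by
  by_contra! hck
  obtain ⟨l, hli, hxl⟩ := hprec ⟨c, hck.trans k.isLt⟩ k hck i hxi
  exact lt_irrefl c (hbefore l hli _ hxl)

theorem PrecAll.lt_precCount (hprec : PrecAll v x) {i : Fin (n + 1)} {l : Fin n}
    (hli : l.castSucc < i) {k : Fin m} (hxl : x l = v k) : (k : ℕ) < precCount v x i := by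
  induction i using Fin.induction generalizing l k with
  | zero => exact absurd hli (Fin.not_lt_zero _)
  | succ i ih =>
    have hmono := self_le_precStep (v := v) (precCount v x i.castSucc) (x i)
    rw [precCount_succ]
    rcases (Fin.castSucc_lt_succ_iff.1 hli).lt_or_eq with hlt | rfl
    · exact (ih (Fin.castSucc_lt_castSucc_iff.2 hlt) hxl).trans_le hmono
    · have hle := hprec.le_of_forall_lt
        (fun l' hl' _ hxl' => ih (Fin.castSucc_lt_castSucc_iff.2 hl') hxl') hxl
      rcases hle.lt_or_eq with hlt | heq
      · exact hlt.trans_le hmono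
      · rw [precStep_of_eq heq _ hxl]
        omega

theorem precAll_iff_forall_le_precCount :
    PrecAll v x ↔ ∀ (i : Fin n) (k : Fin m), x i = v k → (k : ℕ) ≤ precCount v x i.castSucc := by
  constructor
  · intro hprec i k hxi
    exact hprec.le_of_forall_lt
      (fun l hl _ hxl => hprec.lt_precCount (Fin.castSucc_lt_castSucc_iff.2 hl) hxl) hxi
  · intro hle j k hjk i hxi
    obtain ⟨l, hli, hxl⟩ := exists_lt_of_lt_precCount
      ((Fin.lt_def.1 hjk).trans_le (hle i k hxi))
    exact ⟨l, Fin.castSucc_lt_castSucc_iff.1 hli, hxl⟩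

end Counter

theorem partialPrec_iff_ternary_encoding_general {V : Type*} [DecidableEq V] {n s : ℕ}
    (m : Fin s → ℕ) (u : (j : Fin s) → Fin (m j) → V)
    (x : Fin n → V) :
    (∀ j : Fin s, PrecAll (u j) x) ↔
      ∃ Y : Fin (n + 1) → Fin s → ℕ, Y 0 = (fun _ => 0) ∧
        ∀ (i : Fin n) (j : Fin s),
          (∀ k : Fin (m j), x i = u j k → (k : ℕ) ≤ Y i.castSucc j) ∧
          (Y i.succ j =
            if ∃ k : Fin (m j), (k : ℕ) = Y i.castSucc j ∧ x i = u j k then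
              Y i.castSucc j + 1
            else Y i.castSucc j) := by
  simp only [precAll_iff_forall_le_precCount]
  constructor
  · intro hle
    exact ⟨fun i j => precCount (u j) x i, funext fun j => precCount_zero,
      fun i j => ⟨hle j i, precCount_succ i⟩⟩
  · rintro ⟨Y, hY0, hY⟩ j
    have hcount : (fun i => Y i j) = precCount (u j) x :=
      eq_precCount (congrFun hY0 j) fun i => (hY i j).2
    rw [← hcount]
    exact fun i => (hY i j).1

/-- Correctness of the ternary-constraint encoding of value precedence for
partially interchangeable values: `Y i j` records the number of values of
class `j` already used strictly before index `i`. -/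
theorem partialPrec_iff_ternary_encoding {V : Type*} [DecidableEq V] {n s : ℕ}
    (m : Fin s → ℕ) (u : (j : Fin s) → Fin (m j) → V)
    (hinj : ∀ (j j' : Fin s) (k : Fin (m j)) (k' : Fin (m j')),
      u j k = u j' k' → j = j' ∧ (k : ℕ) = (k' : ℕ))
    (x : Fin n → V) :
    (∀ j : Fin s, PrecAll (u j) x) ↔
      ∃ Y : Fin (n + 1) → Fin s → ℕ, Y 0 = (fun _ => 0) ∧
        ∀ (i : Fin n) (j : Fin s),
          (∀ k : Fin (m j), x i = u j k → (k : ℕ) ≤ Y i.castSucc j) ∧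
          (Y i.succ j =
            if ∃ k : Fin (m j), (k : ℕ) = Y i.castSucc j ∧ x i = u j k then
              Y i.castSucc j + 1
            else Y i.castSucc j) :=
  partialPrec_iff_ternary_encoding_general m u x
end

section
/- Let V be a type with decidable equality, v : Fin m → V injective, and x : Fin n → V. Then the global value-precedence constraint holds for all pairs if and only if it holds for all consecutive pairs: (for all j < k < m, Prec(v j, v k, x)) if and only if (for all j with j + 1 < m, Prec(v j, v (j+1), x)). -/
theorem Prec.trans {V : Type*} [DecidableEq V] {n : ℕ} {a b c : V} {x : Fin n → V}
    (hab : Prec a b x) (hbc : Prec b c x) : Prec a c x := by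
  intro i hi
  obtain ⟨l, hli, hl⟩ := hbc i hi
  obtain ⟨l', hl'l, hl'⟩ := hab l hl
  exact ⟨l', hl'l.trans hli, hl'⟩

instance Prec.isTrans {V : Type*} [DecidableEq V] {n : ℕ} (x : Fin n → V) :
    IsTrans V (Prec · · x) :=
  ⟨fun _ _ _ => Prec.trans⟩

theorem Fin.forall_lt_rel_iff_forall_rel_add_one {α : Type*} (r : α → α → Prop) [IsTrans α r]
    {m : ℕ} (f : Fin m → α) :
    (∀ j k : Fin m, j < k → r (f j) (f k)) ↔
      ∀ (j : Fin m) (h : (j : ℕ) + 1 < m), r (f j) (f ⟨(j : ℕ) + 1, h⟩) := by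
  cases m with
  | zero => simp
  | succ m =>
    exact (Fin.liftFun_iff_succ r).trans
      ⟨fun H j h => H ⟨j, by omega⟩, fun H i => H i.castSucc (by simp)⟩

theorem precAll_iff_prec_adjacent_general {V : Type*} [DecidableEq V] {n m : ℕ}
    (v : Fin m → V) (x : Fin n → V) :
    (∀ j k : Fin m, j < k → Prec (v j) (v k) x) ↔
      (∀ (j : Fin m) (h : (j : ℕ) + 1 < m), Prec (v j) (v ⟨(j : ℕ) + 1, h⟩) x) :=
  Fin.forall_lt_rel_iff_forall_rel_add_one (Prec · · x) v

/-- Global value precedence holds for all pairs iff it holds for all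
consecutive pairs of values in the precedence order. -/
theorem precAll_iff_prec_adjacent {V : Type*} [DecidableEq V] {n m : ℕ}
    (v : Fin m → V) (hv : Function.Injective v) (x : Fin n → V) :
    (∀ j k : Fin m, j < k → Prec (v j) (v k) x) ↔
      (∀ (j : Fin m) (h : (j : ℕ) + 1 < m), Prec (v j) (v ⟨(j : ℕ) + 1, h⟩) x) :=
  precAll_iff_prec_adjacent_general v x
end

section
/- (Theorem 6.) Consider set variables S_1,…,S_5 over values {0,1,2} with bounds: ∅ ⊆ S_1 ⊆ {0}, ∅ ⊆ S_2 ⊆ {1}, ∅ ⊆ S_3 ⊆ {1}, ∅ ⊆ S_4 ⊆ {0}, and S_5 = {2}. Then: (a) there exists a tuple of sets within these bounds satisfying the global set value-precedence constraint Prec([0,1,2], S) (the conjunction of Prec(j,k,S) over all 0 ≤ j < k ≤ 2); (b) every tuple of sets within these bounds satisfying the global constraint has 0 ∈ S_1; but (c) for each pair 0 ≤ j < k ≤ 2 there exists a tuple of sets within the bounds with S_1 = ∅ satisfying the single pairwise constraint Prec(j,k,S), and moreover for each pair j < k, each index i, and each value w in the upper bound of S_i, there is a tuple within the bounds satisfying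 Prec(j,k,S) with w ∈ S_i. (Hence enforcing BC on the global set precedence constraint is strictly stronger than enforcing BC on the pairwise set precedence constraints.) -/
/-- Set value precedence for a pair of values: the first set variable
distinguishing `a` and `b` contains `a` and not `b`. Equivalently, whenever
`b ∈ S i` and `a ∉ S i`, there is an earlier `l` with `a ∈ S l` and `b ∉ S l`. -/
def SPrec {V : Type*} [DecidableEq V] {n : ℕ} (a b : V) (S : Fin n → Finset V) : Prop :=
  ∀ i : Fin n, (b ∈ S i ∧ a ∉ S i) → ∃ l : Fin n, l < i ∧ (a ∈ S l ∧ b ∉ S l)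

/-- The bounds of the set variables in the example of Theorem 6:
`∅ ⊆ S₁ ⊆ {0}`, `∅ ⊆ S₂ ⊆ {1}`, `∅ ⊆ S₃ ⊆ {1}`, `∅ ⊆ S₄ ⊆ {0}`, `S₅ = {2}`. -/
def InBounds (S : Fin 5 → Finset ℕ) : Prop :=
  S 0 ⊆ {0} ∧ S 1 ⊆ {1} ∧ S 2 ⊆ {1} ∧ S 3 ⊆ {0} ∧ S 4 = {2}

/-- The upper bounds of the set variables in the example of Theorem 6. -/
def UB : Fin 5 → Finset ℕ := ![{0}, {1}, {1}, {0}, {2}]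

/-- The global set value-precedence constraint over the values `0,1,2`. -/
def GSPrec (S : Fin 5 → Finset ℕ) : Prop :=
  ∀ j k : ℕ, j < k → k < 3 → SPrec j k S

/-!
Under the global constraint, `S₅ = {2}` contains `2` but not `1`, so an earlier set must contain
`1` but not `2`; within the bounds this is `S₂` or `S₃`, which cannot contain `0`, so a still
earlier set contains `0`, and the only candidate is `S₁`. A single pairwise constraint sees only
one link of this chain and is satisfied with `S₁ = ∅`. The upper bounds themselves form a global
support, which gives every value of every upper bound a support.
-/

instance SPrec.decidable {V : Type*} [DecidableEq V] {n : ℕ} (a b : V) (S : Fin n → Finset V) :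
    Decidable (SPrec a b S) := by
  unfold SPrec; infer_instance

instance : DecidablePred InBounds := fun S => by
  unfold InBounds; infer_instance

theorem InBounds.subset_UB {S : Fin 5 → Finset ℕ} (hS : InBounds S) (i : Fin 5) :
    S i ⊆ UB i := by
  obtain ⟨h0, h1, h2, h3, h4⟩ := hS
  fin_cases i
  exacts [h0, h1, h2, h3, h4.subset]

theorem inBounds_UB : InBounds UB := by decide

theorem gsPrec_UB : GSPrec UB := by
  intro j k hjk hk
  interval_cases k <;> interval_cases j <;> decide

theorem InBounds.zero_mem_of_gsPrec {S : Fin 5 → Finset ℕ} (hS : InBounds S) (hG : GSPrec S) :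
    0 ∈ S 0 := by
  have hUB := hS.subset_UB
  obtain ⟨l, -, h1l, -⟩ := hG 1 2 (by norm_num) (by norm_num) 4 (by simp [hS.2.2.2.2])
  have h0l : 0 ∉ S l := fun h0l => by
    have : 0 ∈ UB l ∧ 1 ∈ UB l := ⟨hUB l h0l, hUB l h1l⟩
    revert this; fin_cases l <;> decide
  obtain ⟨m, hml, h0m, -⟩ := hG 0 1 (by norm_num) (by norm_num) l ⟨h1l, h0l⟩
  have hm : m = 0 := by
    have : 0 ∈ UB m ∧ 1 ∈ UB l := ⟨hUB m h0m, hUB l h1l⟩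
    revert hml this; fin_cases m <;> fin_cases l <;> decide
  exact hm ▸ h0m

theorem exists_inBounds_empty_zero_sPrec {j k : ℕ} (hjk : j < k) (hk : k < 3) :
    ∃ S : Fin 5 → Finset ℕ, InBounds S ∧ S 0 = ∅ ∧ SPrec j k S := by
  interval_cases k <;> interval_cases j
  · exact ⟨![∅, ∅, ∅, {0}, {2}], by decide, rfl, by decide⟩
  · exact ⟨![∅, {1}, {1}, {0}, {2}], by decide, rfl, by decide⟩
  · exact ⟨![∅, {1}, {1}, {0}, {2}], by decide, rfl, by decide⟩

/-- (Theorem 6) For the set variables with bounds `∅ ⊆ S₁ ⊆ {0}`,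
`∅ ⊆ S₂ ⊆ {1}`, `∅ ⊆ S₃ ⊆ {1}`, `∅ ⊆ S₄ ⊆ {0}`, `S₅ = {2}`:
(a) the global set precedence constraint `Prec([0,1,2], S)` is satisfiable
within the bounds; (b) every solution within the bounds has `0 ∈ S₁` (so BC on
the global constraint fixes `S₁ = {0}`); but (c) each single pairwise
constraint has a bound support with `S₁ = ∅`, and indeed every value of every
upper bound has a bound support for every pairwise constraint
(so every pairwise constraint is BC). -/
theorem bc_global_set_prec_stronger_than_pairwise :
    (∃ S : Fin 5 → Finset ℕ, InBounds S ∧ GSPrec S) ∧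
    (∀ S : Fin 5 → Finset ℕ, InBounds S → GSPrec S → (0 : ℕ) ∈ S 0) ∧
    (∀ j k : ℕ, j < k → k < 3 →
      ∃ S : Fin 5 → Finset ℕ, InBounds S ∧ S 0 = ∅ ∧ SPrec j k S) ∧
    (∀ j k : ℕ, j < k → k < 3 → ∀ i : Fin 5, ∀ w ∈ UB i,
      ∃ S : Fin 5 → Finset ℕ, InBounds S ∧ SPrec j k S ∧ w ∈ S i) :=
  ⟨⟨UB, inBounds_UB, gsPrec_UB⟩,
    fun _ hS hG => hS.zero_mem_of_gsPrec hG,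
    fun _ _ hjk hk => exists_inBounds_empty_zero_sPrec hjk hk,
    fun j k hjk hk _ _ hw => ⟨UB, inBounds_UB, gsPrec_UB j k hjk hk, hw⟩⟩
end
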